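/- arXiv:2104.05178 — 2 statements merged into one kernel-verified Lean document; each statement's English description precedes it below -/
import Mathlib

section
/- Let A be an M_R × M complex matrix, c > 0, and for each 1 ≤ i ≤ M let T_i(Q) = log det(I + c·(AQ)_i^M* (AQ)_i^M) where (AQ)_i^M denotes columns i through M of AQ. If A = UΣV* is an SVD of A with singular values in nondecreasing order, then Q = V simultaneously maximizes T_i(Q) over all unitary Q for every i: T_i(V) = ∑_{k=i}^{M} log(1 + c·σₖ²) ≥ T_i(Q) for all unitary Q ∈ ℂ^{M×M}. -/
open Matrix

/-- Columns `i, i+1, ..., M-1` (0-indexed) of `B`. -/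
def tailCols (M_R M : ℕ) (B : Matrix (Fin M_R) (Fin M) ℂ) (i : ℕ) :
    Matrix (Fin M_R) (Fin (M - i)) ℂ :=
  fun r k => B r ⟨i + (k : ℕ), by omega⟩

/-- The tail capacity `T_i(Q) = log det(I + c ((AQ)_i^M)* (AQ)_i^M)`. -/
noncomputable def tailCap (M_R M : ℕ) (c : ℝ)
    (B : Matrix (Fin M_R) (Fin M) ℂ) (i : ℕ) : ℝ :=
  Real.logb 2 ((1 + (c : ℂ) •
    ((tailCols M_R M B i)ᴴ * tailCols M_R M B i)).det.re)

private lemma expand_det {n M : ℕ} (W : Matrix (Fin M) (Fin n) ℂ) (m : Fin M → ℝ) :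
    (Wᴴ * Matrix.diagonal (fun k => ((m k) : ℂ)) * W).det
      = ∑ f : Fin n → Fin M,
          (∏ j, (starRingEnd ℂ (W (f j) j) * (m (f j) : ℂ))) * (W.submatrix f id).det := by
  have hX : (Wᴴ * Matrix.diagonal (fun k => ((m k) : ℂ)) * W)
      = fun j => ∑ r, (starRingEnd ℂ (W r j) * (m r : ℂ)) • (fun l => W r l) := by
    funext j l
    simp [Matrix.mul_apply, Matrix.diagonal_apply, Matrix.conjTranspose_apply,
      Finset.sum_apply, mul_ite, ite_mul, mul_assoc]
  have hdet : ∀ N : Matrix (Fin n) (Fin n) ℂ, N.det = Matrix.detRowAlternating N := fun _ => rfl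
  have hms := (Matrix.detRowAlternating (R := ℂ) (n := Fin n)).toMultilinearMap.map_sum
    (g := fun (j : Fin n) (r : Fin M) => (starRingEnd ℂ (W r j) * (m r : ℂ)) • (fun l => W r l))
  rw [hdet, hX]
  rw [AlternatingMap.coe_multilinearMap] at hms
  rw [hms]
  congr 1
  funext f
  have := (Matrix.detRowAlternating (R := ℂ) (n := Fin n)).toMultilinearMap.map_smul_univ
    (fun j => (starRingEnd ℂ (W (f j) j) * (m (f j) : ℂ))) (fun j => (fun l => W (f j) l))
  rw [AlternatingMap.coe_multilinearMap] at this
  rw [this]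
  rw [smul_eq_mul]
  rfl

private lemma inner_sum2 {n M : ℕ} (W : Matrix (Fin M) (Fin n) ℂ) (m : Fin M → ℝ)
    (g : Fin n → Fin M) :
    ∑ σ : Equiv.Perm (Fin n),
        (∏ j, (starRingEnd ℂ (W ((g ∘ σ) j) j) * (m ((g ∘ σ) j) : ℂ)))
          * (W.submatrix (g ∘ σ) id).det
      = (((∏ k, m (g k)) * Complex.normSq ((W.submatrix g id).det) : ℝ) : ℂ) := by
  have hterm : ∀ σ : Equiv.Perm (Fin n),
      (∏ j, (starRingEnd ℂ (W ((g ∘ σ) j) j) * (m ((g ∘ σ) j) : ℂ)))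
          * (W.submatrix (g ∘ σ) id).det
        = ((∏ k, m (g k) : ℝ) : ℂ) *
          ((Equiv.Perm.sign σ : ℂ) * ∏ j, starRingEnd ℂ (W (g (σ j)) j))
            * (W.submatrix g id).det := by
    intro σ
    have h1 : (W.submatrix (g ∘ σ) id) = (W.submatrix g id).submatrix σ id := rfl
    have h2 : ((W.submatrix g id).submatrix σ id).det
        = (Equiv.Perm.sign σ : ℂ) * (W.submatrix g id).det := by
      rw [Matrix.det_permute]
      try simp
    have h3 : (∏ j, (m ((g ∘ σ) j) : ℂ)) = ∏ j, (m (g j) : ℂ) :=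
      Equiv.prod_comp σ (fun j => (m (g j) : ℂ))
    rw [h1, h2, Finset.prod_mul_distrib, h3]
    simp only [Function.comp_apply]
    push_cast
    try ring
  rw [Finset.sum_congr rfl (fun σ _ => hterm σ), ← Finset.sum_mul, ← Finset.mul_sum]
  have h4 : ∑ σ : Equiv.Perm (Fin n),
      ((Equiv.Perm.sign σ : ℂ) * ∏ j, starRingEnd ℂ (W (g (σ j)) j))
      = ((W.submatrix g id).map (starRingEnd ℂ)).det := by
    rw [Matrix.det_apply]
    congr 1
    funext σ
    simp [Matrix.map_apply, Matrix.submatrix_apply, Units.smul_def, zsmul_eq_mul]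
  have h5 : ((W.submatrix g id).map (starRingEnd ℂ)).det
      = starRingEnd ℂ ((W.submatrix g id).det) := by
    rw [← RingHom.mapMatrix_apply]
    exact (RingHom.map_det _ _).symm
  rw [h4, h5]
  push_cast
  rw [mul_assoc, Complex.normSq_eq_conj_mul_self]

private lemma det_eq_sum_sm {n M : ℕ} (W : Matrix (Fin M) (Fin n) ℂ) (m : Fin M → ℝ)
    (hexp : (Wᴴ * Matrix.diagonal (fun k => ((m k) : ℂ)) * W).det
      = ∑ f : Fin n → Fin M,
          (∏ j, (starRingEnd ℂ (W (f j) j) * (m (f j) : ℂ))) * (W.submatrix f id).det)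
    (hinner : ∀ g : Fin n → Fin M,
      ∑ σ : Equiv.Perm (Fin n),
        (∏ j, (starRingEnd ℂ (W ((g ∘ σ) j) j) * (m ((g ∘ σ) j) : ℂ)))
          * (W.submatrix (g ∘ σ) id).det
      = (((∏ k, m (g k)) * Complex.normSq ((W.submatrix g id).det) : ℝ) : ℂ)) :
    (Wᴴ * Matrix.diagonal (fun k => ((m k) : ℂ)) * W).det
      = ((∑ g ∈ Finset.univ.filter (fun g : Fin n → Fin M => StrictMono g),
          (∏ k, m (g k)) * Complex.normSq ((W.submatrix g id).det) : ℝ) : ℂ) := by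
  classical
  set T : (Fin n → Fin M) → ℂ := fun f =>
    (∏ j, (starRingEnd ℂ (W (f j) j) * (m (f j) : ℂ))) * (W.submatrix f id).det with hT
  have h0 : ∀ f : Fin n → Fin M, ¬ Function.Injective f → T f = 0 := by
    intro f hf
    rw [Function.not_injective_iff] at hf
    obtain ⟨a, b, hab, hne⟩ := hf
    have : (W.submatrix f id).det = 0 := by
      apply Matrix.det_zero_of_row_eq hne
      funext l
      simp [Matrix.submatrix_apply, hab]
    simp [hT, this]
  -- restrict to injective functions
  have h1 : (∑ f : Fin n → Fin M, T f)
      = ∑ f ∈ Finset.univ.filter (fun f : Fin n → Fin M => Function.Injective f), T f := by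
    rw [Finset.sum_filter_of_ne]
    intro f _ hf
    by_contra hinj
    exact hf (h0 f hinj)
  -- biject with (strictMono, perm) pairs
  have h2 : (∑ f ∈ Finset.univ.filter (fun f : Fin n → Fin M => Function.Injective f), T f)
      = ∑ p ∈ (Finset.univ.filter (fun g : Fin n → Fin M => StrictMono g)) ×ˢ
          (Finset.univ : Finset (Equiv.Perm (Fin n))), T (p.1 ∘ p.2) := by
    apply Finset.sum_nbij'
      (i := fun f => (f ∘ Tuple.sort f, (Tuple.sort f)⁻¹))
      (j := fun p => p.1 ∘ p.2)
    · intro f hf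
      simp only [Finset.mem_filter, Finset.mem_univ, true_and] at hf
      simp only [Finset.mem_product, Finset.mem_filter, Finset.mem_univ, true_and, and_true]
      exact (Tuple.monotone_sort f).strictMono_of_injective
        (hf.comp (Tuple.sort f).injective)
    · intro p hp
      simp only [Finset.mem_product, Finset.mem_filter, Finset.mem_univ, true_and, and_true] at hp
      simp only [Finset.mem_filter, Finset.mem_univ, true_and]
      exact hp.injective.comp (Equiv.injective _)
    · intro f hf
      funext k
      simp
    · intro p hp
      simp only [Finset.mem_product, Finset.mem_filter, Finset.mem_univ, true_and, and_true] at hp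
      obtain ⟨g, σ⟩ := p
      have hgσ : StrictMono g := hp
      set τ := Tuple.sort (g ∘ σ) with hτ
      have hsm : StrictMono ((g ∘ σ) ∘ τ) :=
        (Tuple.monotone_sort (g ∘ σ)).strictMono_of_injective
          ((hgσ.injective.comp σ.injective).comp τ.injective)
      have hrange : Set.range ((g ∘ σ) ∘ τ) = Set.range g := by
        have h6 : Set.range ((g ∘ σ) ∘ τ) = Set.range (g ∘ σ) := by
          rw [Set.range_comp (g ∘ σ), Equiv.range_eq_univ, Set.image_univ]
        rw [h6, Set.range_comp, Equiv.range_eq_univ, Set.image_univ]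
      have hgg : (g ∘ σ) ∘ τ = g := by
        haveI hwf : WellFoundedLT (Fin n) := Finite.to_wellFoundedLT
        exact (hsm.range_inj hgσ).mp hrange
      have hcomp : ∀ k, σ (τ k) = k := fun k => hgσ.injective (congrFun hgg k)
      have hτσ : τ⁻¹ = σ := by
        have hτ' : τ = σ⁻¹ := Equiv.ext fun k => σ.injective (by simp [hcomp k])
        rw [hτ']
        simp
      exact Prod.ext hgg hτσ
    · intro f hf
      show T f = T ((f ∘ ⇑(Tuple.sort f)) ∘ ⇑((Tuple.sort f)⁻¹))
      have hff : ((f ∘ ⇑(Tuple.sort f)) ∘ ⇑((Tuple.sort f)⁻¹)) = f := by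
        funext k; simp
      rw [hff]
  rw [hexp, h1, h2, Finset.sum_product]
  rw [Finset.sum_congr rfl (fun g _ => hinner g)]
  push_cast
  rfl

private lemma sm_lower_nat {n M : ℕ} (g : Fin n → Fin M) (hg : StrictMono g) :
    ∀ t : ℕ, ∀ ht : t < n, t ≤ (g ⟨t, ht⟩ : ℕ) := by
  intro t
  induction t with
  | zero => intro ht; exact Nat.zero_le _
  | succ t ih =>
      intro hk
      have ht : t < n := by omega
      have h1 : (g ⟨t, ht⟩ : ℕ) < (g ⟨t + 1, hk⟩ : ℕ) :=
        hg (Fin.mk_lt_mk.mpr (by omega))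
      have h2 := ih ht
      omega

private lemma sm_lower {n M : ℕ} (g : Fin n → Fin M) (hg : StrictMono g) (k : Fin n) :
    (k : ℕ) ≤ (g k : ℕ) := by
  have := sm_lower_nat g hg k.1 k.2
  simpa using this

private lemma sm_upper {n M : ℕ} (g : Fin n → Fin M) (hg : StrictMono g) (k : Fin n) :
    (g k : ℕ) ≤ M - n + (k : ℕ) := by
  have hn : 0 < n := k.pos
  have hnM : n ≤ M := by
    have h1 := sm_lower_nat g hg (n - 1) (by omega)
    have h2 := (g ⟨n - 1, by omega⟩).isLt
    omega
  set g' : Fin n → Fin M := fun j => (g j.rev).rev with hg'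
  have hg'sm : StrictMono g' := by
    intro a b hab
    simp only [hg']
    rw [Fin.rev_lt_rev]
    exact hg (Fin.rev_lt_rev.mpr hab)
  have := sm_lower g' hg'sm k.rev
  simp only [hg', Fin.rev_rev] at this
  rw [Fin.val_rev, Fin.val_rev] at this
  have h1 := (g k).isLt
  have h2 := k.isLt
  omega

private lemma tail_sum {M : ℕ} (i : Fin M) (F : Fin M → ℝ) :
    ∑ k ∈ Finset.univ.filter (fun k : Fin M => i ≤ k), F k
      = ∑ k : Fin (M - (i : ℕ)), F ⟨(i : ℕ) + (k : ℕ), by omega⟩ := by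
  refine Finset.sum_nbij'
    (i := fun k : Fin M => (⟨(k : ℕ) - (i : ℕ), by omega⟩ : Fin (M - (i : ℕ))))
    (j := fun k : Fin (M - (i : ℕ)) => (⟨(i : ℕ) + (k : ℕ), by omega⟩ : Fin M)) ?_ ?_ ?_ ?_ ?_
  · intro a ha; simp
  · intro a ha
    simp only [Finset.mem_filter, Finset.mem_univ, true_and]
    rw [Fin.le_def]; simp
  · intro a ha
    simp only [Finset.mem_filter, Finset.mem_univ, true_and] at ha
    have := Fin.le_def.mp ha
    apply Fin.ext; simp; omega
  · intro a ha
    apply Fin.ext; simp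
  · intro a ha
    simp only [Finset.mem_filter, Finset.mem_univ, true_and] at ha
    have := Fin.le_def.mp ha
    congr 1
    apply Fin.ext; simp; omega

private lemma tail_prod {M : ℕ} (i : Fin M) (F : Fin M → ℝ) :
    ∏ k ∈ Finset.univ.filter (fun k : Fin M => i ≤ k), F k
      = ∏ k : Fin (M - (i : ℕ)), F ⟨(i : ℕ) + (k : ℕ), by omega⟩ := by
  refine Finset.prod_nbij'
    (i := fun k : Fin M => (⟨(k : ℕ) - (i : ℕ), by omega⟩ : Fin (M - (i : ℕ))))
    (j := fun k : Fin (M - (i : ℕ)) => (⟨(i : ℕ) + (k : ℕ), by omega⟩ : Fin M)) ?_ ?_ ?_ ?_ ?_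
  · intro a ha; simp
  · intro a ha
    simp only [Finset.mem_filter, Finset.mem_univ, true_and]
    rw [Fin.le_def]; simp
  · intro a ha
    simp only [Finset.mem_filter, Finset.mem_univ, true_and] at ha
    have := Fin.le_def.mp ha
    apply Fin.ext; simp; omega
  · intro a ha
    apply Fin.ext; simp
  · intro a ha
    simp only [Finset.mem_filter, Finset.mem_univ, true_and] at ha
    have := Fin.le_def.mp ha
    congr 1
    apply Fin.ext; simp; omega

private lemma tail_gram {a M : ℕ} (P : Matrix (Fin a) (Fin M) ℂ) (d : Fin M → ℂ)
    (h : Pᴴ * P = Matrix.diagonal d) (i : Fin M) :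
    (tailCols a M P (i : ℕ))ᴴ * tailCols a M P (i : ℕ)
      = Matrix.diagonal (fun k : Fin (M - (i : ℕ)) => d ⟨(i : ℕ) + (k : ℕ), by omega⟩) := by
  ext k l
  have hmem : ∀ b : Fin (M - (i : ℕ)), (i : ℕ) + (b : ℕ) < M := fun b => by omega
  have h1 : ((tailCols a M P (i : ℕ))ᴴ * tailCols a M P (i : ℕ)) k l
      = (Pᴴ * P) ⟨(i : ℕ) + (k : ℕ), hmem k⟩ ⟨(i : ℕ) + (l : ℕ), hmem l⟩ := by
    simp [Matrix.mul_apply, Matrix.conjTranspose_apply, tailCols]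
  rw [h1, h]
  rcases eq_or_ne k l with rfl | hkl
  · simp
  · have hne : (⟨(i : ℕ) + (k : ℕ), hmem k⟩ : Fin M) ≠ ⟨(i : ℕ) + (l : ℕ), hmem l⟩ := by
      simp only [ne_eq, Fin.mk.injEq]
      intro hcon
      exact hkl (Fin.ext (by omega))
    rw [Matrix.diagonal_apply_ne _ hne, Matrix.diagonal_apply_ne _ hkl]

set_option maxHeartbeats 1000000 in
/-- `Q = V` simultaneously maximizes all tail capacities `T_i` over unitary
matrices, achieving `∑_{k ≥ i} log(1 + c σₖ²)`. -/
theorem right_singular_rotation_maximizes_all_tails (M_R M : ℕ) (hM : M ≤ M_R)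
    (A : Matrix (Fin M_R) (Fin M) ℂ)
    (U : Matrix (Fin M_R) (Fin M) ℂ) (hU : Uᴴ * U = 1)
    (σ : Fin M → ℝ) (hσ0 : ∀ k, 0 ≤ σ k) (hσmono : Monotone σ)
    (V : Matrix (Fin M) (Fin M) ℂ) (hV : Vᴴ * V = 1)
    (hA : A = U * Matrix.diagonal (fun k => ((σ k : ℝ) : ℂ)) * Vᴴ)
    (c : ℝ) (hc : 0 < c) :
    ∀ i : Fin M,
      tailCap M_R M c (A * V) i =
        (∑ k ∈ Finset.univ.filter (fun k : Fin M => i ≤ k),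
          Real.logb 2 (1 + c * σ k ^ 2)) ∧
      ∀ Q : Matrix (Fin M) (Fin M) ℂ, Qᴴ * Q = 1 →
        tailCap M_R M c (A * Q) i ≤ tailCap M_R M c (A * V) i := by
  intro i
  classical
  set m : Fin M → ℝ := fun k => 1 + c * σ k ^ 2 with hm
  have hm1 : ∀ k, 1 ≤ m k := by
    intro k
    have := hσ0 k
    simp only [hm]
    nlinarith [sq_nonneg (σ k), hc]
  have hmpos : ∀ k, 0 < m k := fun k => lt_of_lt_of_le one_pos (hm1 k)
  have hmmono : Monotone m := by
    intro a b hab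
    have h1 := hσmono hab
    have h2 := hσ0 a
    have h3 : σ a * σ a ≤ σ b * σ b := mul_self_le_mul_self h2 h1
    simp only [hm]
    nlinarith [h3]
  set D : Matrix (Fin M) (Fin M) ℂ := Matrix.diagonal (fun k => ((σ k : ℝ) : ℂ)) with hD
  set D2 : Matrix (Fin M) (Fin M) ℂ :=
    Matrix.diagonal (fun k => ((σ k ^ 2 : ℝ) : ℂ)) with hD2
  have hDH : Dᴴ = D := by
    rw [hD, Matrix.diagonal_conjTranspose]
    have hst : (star fun k : Fin M => ((σ k : ℝ) : ℂ)) = fun k : Fin M => ((σ k : ℝ) : ℂ) := by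
      funext k
      simp [Pi.star_apply, Complex.conj_ofReal]
    rw [hst]
  have hDD : D * D = D2 := by
    rw [hD, hD2, Matrix.diagonal_mul_diagonal]
    congr 1
    funext k
    push_cast
    ring
  -- the value at V
  have hAV : A * V = U * D := by
    rw [hA, Matrix.mul_assoc (U * D) Vᴴ V, hV, Matrix.mul_one]
  have hUD : (U * D)ᴴ * (U * D) = D2 := by
    rw [Matrix.conjTranspose_mul, Matrix.mul_assoc, ← Matrix.mul_assoc Uᴴ U D, hU,
      Matrix.one_mul, hDH, hDD]
  have hgram1 := tail_gram (U * D) _ hUD i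
  have hdiagm : ∀ nn (dd : Fin nn → ℝ),
      (1 : Matrix (Fin nn) (Fin nn) ℂ) + (c : ℂ) • Matrix.diagonal (fun k => ((dd k ^ 2 : ℝ) : ℂ))
        = Matrix.diagonal (fun k => ((1 + c * dd k ^ 2 : ℝ) : ℂ)) := by
    intro nn dd
    ext a b
    rcases eq_or_ne a b with rfl | hab
    · simp only [Matrix.add_apply, Matrix.smul_apply, Matrix.one_apply_eq,
        Matrix.diagonal_apply_eq, smul_eq_mul]
      push_cast
      ring
    · simp [Matrix.one_apply_ne hab, Matrix.diagonal_apply_ne _ hab]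
  have hdet1 : (1 + (c : ℂ) •
        ((tailCols M_R M (A * V) (i : ℕ))ᴴ * tailCols M_R M (A * V) (i : ℕ))).det
      = ((∏ k : Fin (M - (i : ℕ)), m ⟨(i : ℕ) + (k : ℕ), by omega⟩ : ℝ) : ℂ) := by
    rw [hAV, hgram1]
    rw [hdiagm (M - (i : ℕ)) (fun k => σ ⟨(i : ℕ) + (k : ℕ), by omega⟩)]
    rw [Matrix.det_diagonal]
    simp only [hm]
    push_cast
    ring
  have hPpos : 0 < ∏ k ∈ Finset.univ.filter (fun k : Fin M => i ≤ k), m k :=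
    Finset.prod_pos (fun k _ => hmpos k)
  have hP1 : 1 ≤ ∏ k ∈ Finset.univ.filter (fun k : Fin M => i ≤ k), m k := by
    calc (1 : ℝ) = ∏ _k ∈ Finset.univ.filter (fun k : Fin M => i ≤ k), (1 : ℝ) :=
          (Finset.prod_const_one).symm
      _ ≤ _ := Finset.prod_le_prod (fun _ _ => zero_le_one) (fun k _ => hm1 k)
  have hval : tailCap M_R M c (A * V) i
      = Real.logb 2 (∏ k ∈ Finset.univ.filter (fun k : Fin M => i ≤ k), m k) := by
    unfold tailCap
    rw [hdet1, Complex.ofReal_re, tail_prod i m]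
  have hvalue : tailCap M_R M c (A * V) i
      = ∑ k ∈ Finset.univ.filter (fun k : Fin M => i ≤ k), Real.logb 2 (1 + c * σ k ^ 2) := by
    rw [hval, Real.logb_prod _ _ (fun k _ => ne_of_gt (hmpos k))]
  refine ⟨hvalue, ?_⟩
  -- the inequality
  intro Q hQ
  set Qt : Matrix (Fin M) (Fin (M - (i : ℕ))) ℂ := tailCols M M Q (i : ℕ) with hQtdef
  have hQt : Qtᴴ * Qt = 1 := by
    have := tail_gram Q (fun _ => (1 : ℂ)) (by rw [hQ, Matrix.diagonal_one]) i
    rw [hQtdef, this]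
    exact Matrix.diagonal_one
  have htailAQ : tailCols M_R M (A * Q) (i : ℕ) = A * Qt := by
    ext r k
    simp [tailCols, Matrix.mul_apply, hQtdef]
  set W : Matrix (Fin M) (Fin (M - (i : ℕ))) ℂ := Vᴴ * Qt with hWdef
  have hVV : V * Vᴴ = 1 := mul_eq_one_comm.mp hV
  have hW : Wᴴ * W = 1 := by
    rw [hWdef, Matrix.conjTranspose_mul, Matrix.conjTranspose_conjTranspose,
      Matrix.mul_assoc, ← Matrix.mul_assoc V Vᴴ Qt, hVV, Matrix.one_mul, hQt]
  have hAHA : Aᴴ * A = V * D2 * Vᴴ := by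
    have hUX : Uᴴ * (U * (D * Vᴴ)) = D * Vᴴ := by
      rw [← Matrix.mul_assoc, hU, Matrix.one_mul]
    rw [hA, Matrix.conjTranspose_mul, Matrix.conjTranspose_mul,
      Matrix.conjTranspose_conjTranspose, hDH]
    simp only [Matrix.mul_assoc]
    rw [hUX, ← Matrix.mul_assoc D D Vᴴ, hDD]
  have hgram2 : (A * Qt)ᴴ * (A * Qt) = Wᴴ * D2 * W := by
    rw [Matrix.conjTranspose_mul, Matrix.mul_assoc, ← Matrix.mul_assoc Aᴴ A Qt, hAHA,
      hWdef, Matrix.conjTranspose_mul, Matrix.conjTranspose_conjTranspose]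
    simp only [Matrix.mul_assoc]
  have hkey : (1 : Matrix (Fin (M - (i : ℕ))) (Fin (M - (i : ℕ))) ℂ)
        + (c : ℂ) • ((A * Qt)ᴴ * (A * Qt))
      = Wᴴ * Matrix.diagonal (fun k => ((m k : ℝ) : ℂ)) * W := by
    rw [hgram2]
    have hd : Matrix.diagonal (fun k : Fin M => ((m k : ℝ) : ℂ))
        = (1 : Matrix (Fin M) (Fin M) ℂ) + (c : ℂ) • D2 := by
      rw [hD2, hdiagm M σ]
    rw [hd, Matrix.mul_add, Matrix.mul_one, Matrix.add_mul, hW, Matrix.mul_smul,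
      Matrix.smul_mul]
  have hdetQ := det_eq_sum_sm W m (expand_det W m) (inner_sum2 W m)
  -- bound the sum
  have hnormSq1 : ∑ g ∈ Finset.univ.filter (fun g : Fin (M - (i : ℕ)) → Fin M => StrictMono g),
      Complex.normSq ((W.submatrix g id).det) = 1 := by
    have h1 := det_eq_sum_sm W (fun _ => 1) (expand_det W (fun _ => 1))
      (inner_sum2 W (fun _ => 1))
    have h2 : Matrix.diagonal (fun _ : Fin M => ((1 : ℝ) : ℂ)) = 1 := by
      rw [Complex.ofReal_one]
      exact Matrix.diagonal_one
    rw [h2, Matrix.mul_one, hW, Matrix.det_one] at h1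
    simp only [Finset.prod_const_one, one_mul] at h1
    exact_mod_cast h1.symm
  set S : ℝ := ∑ g ∈ Finset.univ.filter (fun g : Fin (M - (i : ℕ)) → Fin M => StrictMono g),
      (∏ k, m (g k)) * Complex.normSq ((W.submatrix g id).det) with hS
  have hSnonneg : 0 ≤ S := by
    apply Finset.sum_nonneg
    intro g _
    apply mul_nonneg
    · exact Finset.prod_nonneg (fun k _ => le_of_lt (hmpos _))
    · exact Complex.normSq_nonneg _
  have hSle : S ≤ ∏ k ∈ Finset.univ.filter (fun k : Fin M => i ≤ k), m k := by
    rw [hS]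
    calc ∑ g ∈ Finset.univ.filter (fun g : Fin (M - (i : ℕ)) → Fin M => StrictMono g),
          (∏ k, m (g k)) * Complex.normSq ((W.submatrix g id).det)
        ≤ ∑ g ∈ Finset.univ.filter (fun g : Fin (M - (i : ℕ)) → Fin M => StrictMono g),
          (∏ k ∈ Finset.univ.filter (fun k : Fin M => i ≤ k), m k)
            * Complex.normSq ((W.submatrix g id).det) := by
          apply Finset.sum_le_sum
          intro g hg
          simp only [Finset.mem_filter, Finset.mem_univ, true_and] at hg
          apply mul_le_mul_of_nonneg_right _ (Complex.normSq_nonneg _)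
          rw [tail_prod i m]
          apply Finset.prod_le_prod (fun k _ => le_of_lt (hmpos _))
          intro k _
          apply hmmono
          rw [Fin.le_def]
          have h3 := sm_upper g hg k
          have h4 := i.isLt
          have h5 := k.isLt
          simp only [Fin.val_mk]
          omega
      _ = (∏ k ∈ Finset.univ.filter (fun k : Fin M => i ≤ k), m k) * 1 := by
          rw [← Finset.mul_sum, hnormSq1]
      _ = _ := mul_one _
  -- conclude
  have hcap : tailCap M_R M c (A * Q) i = Real.logb 2 S := by
    unfold tailCap
    rw [htailAQ, hkey, hdetQ, Complex.ofReal_re]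
  rw [hcap, hval]
  rcases eq_or_lt_of_le hSnonneg with hS0 | hS0
  · rw [← hS0, Real.logb_zero]
    exact Real.logb_nonneg (by norm_num) hP1
  · exact (Real.logb_le_logb (by norm_num) hS0 hPpos).mpr hSle
end

section
/- (Interlacing-type inequality) Let A be an M_R × M complex matrix with singular values σ₁ ≤ ... ≤ σ_M, and let B be the submatrix consisting of the last M−i+1 columns of AV where V is the right-singular-vector matrix of A (ordered by nondecreasing singular value). Then det(I + c·B*B) = ∏_{k=i}^{M}(1 + c·σₖ²), and for any other M × (M−i+1) matrix P with orthonormal columns, det(I + c·(AP)*(AP)) ≤ ∏_{k=i}^{M}(1 + c·σₖ²). -/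
/-!
Write `A = U Σ V*` and `Q = V* P`, which again has orthonormal columns. Then
`I + c (AP)*(AP) = Q* D Q` with `D = diag(1 + c σₖ²)`, and by the Cauchy–Binet formula
`det (Q* D Q) = ∑ₛ (∏_{k ∈ s} Dₖ) |det Q_s|²`, the sum running over the sets `s` of
`M - i` rows of `Q`. The weights `|det Q_s|²` sum to `det (Q* Q) = 1`, so the determinant is a
convex combination of products of `M - i` of the `Dₖ`, each at most the product of the
largest ones. For `P` the matching columns of `V`, `Q* D Q` is the diagonal matrix of those
largest `Dₖ`.
-/

open Matrix

open Finset Function Equiv Set.powersetCard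

namespace Matrix

variable {R ι κ : Type*} [CommRing R]

theorem det_mul_eq_sum_prod_mul_det_submatrix [Fintype ι] [Fintype κ] [DecidableEq κ]
    (A : Matrix κ ι R) (B : Matrix ι κ R) :
    det (A * B) = ∑ p : κ → ι, (∏ i, B (p i) i) * det (A.submatrix id p) := by
  simp only [det_apply', mul_apply, prod_univ_sum, mul_sum, Fintype.piFinset_univ,
    submatrix_apply, id, prod_mul_distrib]
  rw [Finset.sum_comm]
  exact sum_congr rfl fun p _ => sum_congr rfl fun σ _ => by ring

theorem det_submatrix_id_eq_zero_of_not_injective [Fintype κ] [DecidableEq κ]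
    (A : Matrix κ ι R) {p : κ → ι} (hp : ¬Injective p) : det (A.submatrix id p) = 0 := by
  obtain ⟨i, j, hij, hne⟩ : ∃ i j, p i = p j ∧ i ≠ j := by
    simpa [Injective] using hp
  exact det_zero_of_column_eq hne fun k => by simp [hij]

end Matrix

section PowersetCard

variable {ι : Type*} [LinearOrder ι] {n : ℕ}

theorem Set.powersetCard.prod_ofFinEmbEquiv_symm {M : Type*} [CommMonoid M]
    (s : Set.powersetCard ι n) (g : ι → M) :
    ∏ i, g (ofFinEmbEquiv.symm s i) = ∏ k ∈ s.val, g k := by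
  conv_rhs => rw [← map_orderEmbOfFin_univ s.val s.prop, prod_map]
  rfl

/-- An injective `p : Fin n → ι` factors uniquely as `f ∘ τ`, with `f` the increasing
enumeration of its range and `τ` a permutation. -/
theorem Fintype.sum_injective_eq_sum_powersetCard_sum_perm [Fintype ι] {M : Type*}
    [AddCommMonoid M] (g : (Fin n → ι) → M) :
    ∑ p : Fin n → ι with Injective p, g p =
      ∑ s : Set.powersetCard ι n, ∑ τ : Perm (Fin n), g (ofFinEmbEquiv.symm s ∘ τ) := by
  have range_eq (s : Set.powersetCard ι n) : Set.range (ofFinEmbEquiv.symm s) = s := by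
    ext i; exact mem_range_ofFinEmbEquiv_symm_iff_mem s i
  rw [← Fintype.sum_prod_type']
  symm
  refine sum_bij (fun x _ => ofFinEmbEquiv.symm x.1 ∘ x.2) (fun x _ => ?_) ?_ ?_ fun _ _ => rfl
  · simpa using (ofFinEmbEquiv.symm x.1).injective.comp x.2.injective
  · rintro ⟨s, τ⟩ - ⟨t, τ'⟩ - h
    obtain rfl : s = t := by
      apply SetLike.coe_injective
      rw [← range_eq, ← range_eq, ← τ.surjective.range_comp (ofFinEmbEquiv.symm s),
        ← τ'.surjective.range_comp (ofFinEmbEquiv.symm t)]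
      exact congrArg Set.range h
    obtain rfl : τ = τ' := Equiv.ext fun a => (ofFinEmbEquiv.symm s).injective (congrFun h a)
    rfl
  · intro p hp
    have hp : Injective p := by simpa using hp
    set s := ofFinEmb n ι ⟨p, hp⟩
    have hrange : Set.range p = Set.range (ofFinEmbEquiv.symm s) := by
      rw [range_eq]; exact (coe_ofFinEmb n ι ⟨p, hp⟩).symm
    refine ⟨(s, (Equiv.ofInjective p hp).trans ((Equiv.setCongr hrange).trans
      (Equiv.ofInjective _ (ofFinEmbEquiv.symm s).injective).symm)), mem_univ _, ?_⟩
    funext i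
    simp [Equiv.apply_ofInjective_symm]

/-- The Cauchy–Binet formula. -/
theorem Matrix.det_mul_eq_sum_powersetCard [Fintype ι] {R : Type*} [CommRing R]
    (A : Matrix (Fin n) ι R) (B : Matrix ι (Fin n) R) :
    det (A * B) = ∑ s : Set.powersetCard ι n,
      det (A.submatrix id (ofFinEmbEquiv.symm s)) *
        det (B.submatrix (ofFinEmbEquiv.symm s) id) := by
  rw [det_mul_eq_sum_prod_mul_det_submatrix,
    ← sum_filter_of_ne fun p _ hp => by_contra fun hinj =>
      hp (by rw [det_submatrix_id_eq_zero_of_not_injective A hinj, mul_zero]),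
    Fintype.sum_injective_eq_sum_powersetCard_sum_perm]
  refine sum_congr rfl fun s _ => ?_
  set f := ofFinEmbEquiv.symm s
  have hperm (τ : Perm (Fin n)) :
      det (A.submatrix id (f ∘ τ)) = Perm.sign τ * det (A.submatrix id f) :=
    det_permute' τ (A.submatrix id f)
  simp only [hperm, det_apply' (B.submatrix f id), submatrix_apply, id, mul_sum]
  exact sum_congr rfl fun τ _ => by rw [mul_comm, mul_comm (Perm.sign τ : R), mul_assoc]; rfl

theorem Matrix.det_conjTranspose_mul_diagonal_mul [Fintype ι] {R : Type*} [CommRing R]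
    [StarRing R] (Q : Matrix ι (Fin n) R) (d : ι → R) :
    det (Qᴴ * diagonal d * Q) = ∑ s : Set.powersetCard ι n,
      (∏ k ∈ s.val, d k) * (star (det (Q.submatrix (ofFinEmbEquiv.symm s) id)) *
        det (Q.submatrix (ofFinEmbEquiv.symm s) id)) := by
  rw [det_mul_eq_sum_powersetCard]
  refine sum_congr rfl fun s _ => ?_
  have hsub : (Qᴴ * diagonal d).submatrix id (ofFinEmbEquiv.symm s) =
      (Q.submatrix (ofFinEmbEquiv.symm s) id)ᴴ *
        diagonal (fun i => d (ofFinEmbEquiv.symm s i)) := by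
    ext a b; simp [mul_diagonal]
  rw [hsub, det_mul, det_conjTranspose, det_diagonal, prod_ofFinEmbEquiv_symm]
  ring

theorem Matrix.re_det_conjTranspose_mul_diagonal_ofReal_mul [Fintype ι]
    (Q : Matrix ι (Fin n) ℂ) (x : ι → ℝ) :
    (det (Qᴴ * diagonal (fun k => (x k : ℂ)) * Q)).re = ∑ s : Set.powersetCard ι n,
      (∏ k ∈ s.val, x k) * Complex.normSq (det (Q.submatrix (ofFinEmbEquiv.symm s) id)) := by
  rw [det_conjTranspose_mul_diagonal_mul, Complex.re_sum]
  refine sum_congr rfl fun s _ => ?_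
  rw [Complex.star_def, ← Complex.normSq_eq_conj_mul_self, ← Complex.ofReal_prod,
    ← Complex.ofReal_mul, Complex.ofReal_re]

end PowersetCard

theorem Finset.prod_le_prod_of_card_eq_of_isUpperSet {ι R : Type*} [LinearOrder ι]
    [CommMonoidWithZero R] [PartialOrder R] [ZeroLEOneClass R] [PosMulMono R]
    {x : ι → R} (hx0 : ∀ k, 0 ≤ x k) (hx : Monotone x) {s t : Finset ι} (hst : #s = #t)
    (ht : IsUpperSet (t : Set ι)) : ∏ k ∈ s, x k ≤ ∏ k ∈ t, x k := by
  classical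
  let e : (s \ t : Finset ι) ≃ (t \ s : Finset ι) := equivOfCardEq (card_sdiff_comm hst)
  have le_e (a : (s \ t : Finset ι)) : (a : ι) ≤ e a := by
    have ha := (mem_sdiff.mp a.2).2
    have hb := (mem_sdiff.mp (e a).2).1
    by_contra! h
    exact ha (ht h.le hb)
  have key : ∏ k ∈ s \ t, x k ≤ ∏ k ∈ t \ s, x k :=
    calc ∏ k ∈ s \ t, x k = ∏ a : (s \ t : Finset ι), x a := (prod_coe_sort _ _).symm
      _ ≤ ∏ a : (s \ t : Finset ι), x (e a) :=
        prod_le_prod (fun _ _ => hx0 _) fun a _ => hx (le_e a)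
      _ = ∏ k ∈ t \ s, x k := (e.prod_comp fun b => x b).trans (prod_coe_sort _ _)
  calc ∏ k ∈ s, x k = (∏ k ∈ s ∩ t, x k) * ∏ k ∈ s \ t, x k :=
        (prod_inter_mul_prod_sdiff s t x).symm
    _ ≤ (∏ k ∈ t ∩ s, x k) * ∏ k ∈ t \ s, x k := by
      rw [inter_comm]; exact mul_le_mul_of_nonneg_left key (prod_nonneg fun k _ => hx0 k)
    _ = ∏ k ∈ t, x k := prod_inter_mul_prod_sdiff t s x

theorem Matrix.re_det_conjTranspose_mul_diagonal_mul_le_prod {ι : Type*} [Fintype ι]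
    [LinearOrder ι] {n : ℕ} (Q : Matrix ι (Fin n) ℂ) (hQ : Qᴴ * Q = 1) {x : ι → ℝ}
    (hx0 : ∀ k, 0 ≤ x k) (hx : Monotone x) {t : Finset ι} (ht : IsUpperSet (t : Set ι))
    (hcard : #t = n) :
    (det (Qᴴ * diagonal (fun k => (x k : ℂ)) * Q)).re ≤ ∏ k ∈ t, x k := by
  set w := fun s : Set.powersetCard ι n =>
    Complex.normSq (det (Q.submatrix (ofFinEmbEquiv.symm s) id))
  have hw : ∑ s, w s = 1 := by
    simpa [hQ] using (re_det_conjTranspose_mul_diagonal_ofReal_mul Q 1).symm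
  rw [re_det_conjTranspose_mul_diagonal_ofReal_mul]
  calc ∑ s, (∏ k ∈ s.val, x k) * w s ≤ ∑ s, (∏ k ∈ t, x k) * w s :=
        sum_le_sum fun s _ => mul_le_mul_of_nonneg_right
          (prod_le_prod_of_card_eq_of_isUpperSet hx0 hx (s.prop.trans hcard.symm) ht)
          (Complex.normSq_nonneg _)
    _ = ∏ k ∈ t, x k := by rw [← mul_sum, hw, mul_one]

namespace Matrix

variable {R m n o p : Type*} [CommRing R] [DecidableEq n]

theorem one_add_smul_diagonal (c : R) (d : n → R) :
    1 + c • diagonal d = diagonal (1 + c • d) := by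
  rw [← diagonal_one, ← diagonal_smul, diagonal_add]; rfl

theorem conjTranspose_mul_self_of_svd [StarRing R] [Fintype m] [Fintype n] [Fintype o]
    {U : Matrix m n R} (hU : Uᴴ * U = 1) (s : n → R) (V : Matrix o n R) (P : Matrix o p R) :
    (U * diagonal s * Vᴴ * P)ᴴ * (U * diagonal s * Vᴴ * P) =
      (Vᴴ * P)ᴴ * diagonal (star s * s) * (Vᴴ * P) := by
  simp only [conjTranspose_mul, diagonal_conjTranspose, Matrix.mul_assoc]
  rw [← Matrix.mul_assoc Uᴴ U, hU, Matrix.one_mul,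
    ← Matrix.mul_assoc (diagonal _) (diagonal _), diagonal_mul_diagonal]
  rfl

theorem one_add_smul_conjTranspose_mul_diagonal_mul [StarRing R] [Fintype n] [Fintype p]
    [DecidableEq p] {Q : Matrix n p R} (hQ : Qᴴ * Q = 1) (c : R) (d : n → R) :
    1 + c • (Qᴴ * diagonal d * Q) = Qᴴ * diagonal (1 + c • d) * Q := by
  rw [← one_add_smul_diagonal, Matrix.mul_add, Matrix.add_mul, Matrix.mul_one, hQ,
    Matrix.mul_smul, Matrix.smul_mul]

end Matrix

def tailIndex (M i : ℕ) : Fin (M - i) ↪ Fin M :=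
  ⟨fun k => ⟨i + k, by omega⟩, fun a b h => Fin.ext (by simpa using congrArg Fin.val h)⟩

@[simp]
theorem val_tailIndex (M i : ℕ) (k : Fin (M - i)) : (tailIndex M i k : ℕ) = i + k := rfl

theorem tailCols_eq_submatrix {M_R M : ℕ} (B : Matrix (Fin M_R) (Fin M) ℂ) (i : ℕ) :
    tailCols M_R M B i = B.submatrix id (tailIndex M i) := rfl

theorem map_univ_tailIndex {M : ℕ} (i : Fin M) : univ.map (tailIndex M i) = Ici i := by
  ext k
  simp only [mem_map, mem_univ, true_and, mem_Ici, Fin.le_def, Fin.ext_iff, val_tailIndex]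
  exact ⟨fun ⟨j, hj⟩ => by omega, fun h => ⟨⟨k - i, by omega⟩, by simp only; omega⟩⟩

theorem top_singular_subspace_maximizes_det_general (M_R M : ℕ)
    (A : Matrix (Fin M_R) (Fin M) ℂ)
    (U : Matrix (Fin M_R) (Fin M) ℂ) (hU : Uᴴ * U = 1)
    (σ : Fin M → ℝ) (hσ0 : ∀ k, 0 ≤ σ k) (hσmono : Monotone σ)
    (V : Matrix (Fin M) (Fin M) ℂ) (hV : Vᴴ * V = 1)
    (hA : A = U * Matrix.diagonal (fun k => ((σ k : ℝ) : ℂ)) * Vᴴ)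
    (c : ℝ) (hc : 0 < c) (i : Fin M) :
    ((1 + (c : ℂ) • ((tailCols M_R M (A * V) i)ᴴ *
        tailCols M_R M (A * V) i)).det.re =
      ∏ k ∈ Finset.univ.filter (fun k : Fin M => i ≤ k), (1 + c * σ k ^ 2)) ∧
    ∀ P : Matrix (Fin M) (Fin (M - (i : ℕ))) ℂ, Pᴴ * P = 1 →
      (1 + (c : ℂ) • ((A * P)ᴴ * (A * P))).det.re ≤
        ∏ k ∈ Finset.univ.filter (fun k : Fin M => i ≤ k), (1 + c * σ k ^ 2) := by
  set x : Fin M → ℝ := fun k => 1 + c * σ k ^ 2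
  have hx0 (k : Fin M) : 0 ≤ x k := by positivity
  have hx : Monotone x := fun a b hab => by
    have := pow_le_pow_left₀ (hσ0 a) (hσmono hab) 2
    simp only [x]; gcongr
  set d : Fin M → ℂ := fun k => ((σ k ^ 2 : ℝ) : ℂ)
  have hd : 1 + (c : ℂ) • d = fun k => (x k : ℂ) := by
    funext k; simp [d, x]
  have gram {κ : Type} (P : Matrix (Fin M) κ ℂ) :
      (A * P)ᴴ * (A * P) = (Vᴴ * P)ᴴ * diagonal d * (Vᴴ * P) := by
    rw [hA, conjTranspose_mul_self_of_svd hU]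
    congr 3; funext k; simp [d, sq]
  rw [filter_le_eq_Ici]
  refine ⟨?_, fun P hP => ?_⟩
  · have hB : (tailCols M_R M (A * V) i)ᴴ * tailCols M_R M (A * V) i =
        diagonal (d ∘ tailIndex M i) := by
      rw [tailCols_eq_submatrix, conjTranspose_submatrix, ← submatrix_mul _ _ _ _ _ bijective_id,
        gram, hV, conjTranspose_one, Matrix.one_mul, Matrix.mul_one, submatrix_diagonal_embedding]
    rw [hB, one_add_smul_diagonal, show 1 + (c : ℂ) • (d ∘ tailIndex M i) =
      fun j => (x (tailIndex M i j) : ℂ) from funext fun j => congrFun hd (tailIndex M i j),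
      det_diagonal, ← Complex.ofReal_prod, Complex.ofReal_re, ← map_univ_tailIndex, prod_map]
  · have hQ : (Vᴴ * P)ᴴ * (Vᴴ * P) = 1 := by
      rw [conjTranspose_mul, conjTranspose_conjTranspose, Matrix.mul_assoc,
        ← Matrix.mul_assoc V, mul_eq_one_comm.mp hV, Matrix.one_mul, hP]
    rw [gram, one_add_smul_conjTranspose_mul_diagonal_mul hQ, hd]
    exact re_det_conjTranspose_mul_diagonal_mul_le_prod _ hQ hx0 hx
      (by simpa using isUpperSet_Ici i) (Fin.card_Ici i)

/-- Restricting the channel to the top right-singular subspace maximizes the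
determinant capacity: the last `M - i` columns of `AV` achieve
`∏_{k ≥ i} (1 + c σₖ²)`, and any orthonormal `P` of the same size achieves no
more. -/
theorem top_singular_subspace_maximizes_det (M_R M : ℕ) (hM : M ≤ M_R)
    (A : Matrix (Fin M_R) (Fin M) ℂ)
    (U : Matrix (Fin M_R) (Fin M) ℂ) (hU : Uᴴ * U = 1)
    (σ : Fin M → ℝ) (hσ0 : ∀ k, 0 ≤ σ k) (hσmono : Monotone σ)
    (V : Matrix (Fin M) (Fin M) ℂ) (hV : Vᴴ * V = 1)
    (hA : A = U * Matrix.diagonal (fun k => ((σ k : ℝ) : ℂ)) * Vᴴ)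
    (c : ℝ) (hc : 0 < c) (i : Fin M) :
    ((1 + (c : ℂ) • ((tailCols M_R M (A * V) i)ᴴ *
        tailCols M_R M (A * V) i)).det.re =
      ∏ k ∈ Finset.univ.filter (fun k : Fin M => i ≤ k), (1 + c * σ k ^ 2)) ∧
    ∀ P : Matrix (Fin M) (Fin (M - (i : ℕ))) ℂ, Pᴴ * P = 1 →
      (1 + (c : ℂ) • ((A * P)ᴴ * (A * P))).det.re ≤
        ∏ k ∈ Finset.univ.filter (fun k : Fin M => i ≤ k), (1 + c * σ k ^ 2) :=
  top_singular_subspace_maximizes_det_general M_R M A U hU σ hσ0 hσmono V hV hA c hc i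
end
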